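/- Let n ≥ 1 and let S be a real (2n)×(2n) symmetric matrix (Sᵀ = S) all of whose (real) eigenvalues λ satisfy 0 < |λ| < 2π. Let J denote the standard symplectic matrix. Then for every t with 0 < t ≤ 1, the matrix exp(t·(J·S)) does not have 1 as a complex eigenvalue; equivalently, det(exp(t·(J·S)) − Id) ≠ 0. -/

import Mathlib

/-!
If `exp (t • J S)` fixed a nonzero vector, its fixed space would be invariant under `J S`, hence
contain a complex eigenvector `v` of `t • J S` whose eigenvalue `μ` satisfies `exp μ = 1`, i.e.
`μ ∈ 2πiℤ`. Applying `J` (with `J² = -1`) to `J S v = (μ / t) v` gives `S v = -(μ / t) J v`, and `J`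
is an isometry, so `‖μ‖ / t = ‖S v‖ / ‖v‖`. Expanding `v` in an orthonormal eigenbasis of `S` puts
this ratio in `(0, 2π)`, which for `0 < t ≤ 1` excludes every point of `2πiℤ`.
-/

open Matrix

theorem Complex.exp_ne_one_of_norm_lt {z : ℂ} (hz : z ≠ 0) (h : ‖z‖ < 2 * Real.pi) :
    Complex.exp z ≠ 1 := by
  intro h1
  obtain ⟨k, rfl⟩ := Complex.exp_eq_one_iff.mp h1
  have hk : (1 : ℝ) ≤ |(k : ℝ)| := by
    rw [← Int.cast_abs]
    exact_mod_cast Int.one_le_abs (by rintro rfl; simp at hz)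
  have hnorm : ‖(k : ℂ) * (2 * Real.pi * Complex.I)‖ = |(k : ℝ)| * (2 * Real.pi) := by
    simp [abs_of_pos Real.pi_pos]
  rw [hnorm] at h
  nlinarith [Real.pi_pos]

theorem Module.End.exists_hasEigenvector_mem_of_mapsTo {K V : Type*} [Field K] [IsAlgClosed K]
    [AddCommGroup V] [Module K V] [FiniteDimensional K V] (f : Module.End K V)
    {p : Submodule K V} (hp : p ≠ ⊥) (hfp : Set.MapsTo f p p) :
    ∃ μ, ∃ v ∈ p, f.HasEigenvector μ v := by
  have := Submodule.nontrivial_iff_ne_bot.mpr hp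
  obtain ⟨μ, hμ⟩ := Module.End.exists_eigenvalue (f.restrict hfp)
  obtain ⟨w, hw⟩ := hμ.exists_hasEigenvector
  refine ⟨μ, w, w.2, f.eigenspace_restrict_le_eigenspace hfp μ ⟨w, hw.1, rfl⟩, ?_⟩
  exact fun h => hw.2 (Subtype.ext h)

theorem LinearMap.IsSymmetric.norm_apply_lt_of_forall_abs_eigenvalue_lt {𝕜 E : Type*} [RCLike 𝕜]
    [NormedAddCommGroup E] [InnerProductSpace 𝕜 E] [FiniteDimensional 𝕜 E] {T : E →ₗ[𝕜] E}
    (hT : T.IsSymmetric) {r : ℝ} (hr : ∀ μ : ℝ, Module.End.HasEigenvalue T μ → |μ| < r)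
    {x : E} (hx : x ≠ 0) :
    ‖T x‖ < r * ‖x‖ := by
  set b := hT.eigenvectorBasis rfl
  have hd i : |hT.eigenvalues rfl i| < r := hr _ (hT.hasEigenvalue_eigenvalues rfl i)
  obtain ⟨i, hi⟩ : ∃ i, b.repr x i ≠ 0 := by
    by_contra! h
    exact hx (b.repr.injective (by ext i; simp [h]))
  have hr0 : 0 ≤ r := (abs_nonneg _).trans (hd i).le
  refine lt_of_pow_lt_pow_left₀ 2 (by positivity) ?_
  rw [← b.repr.norm_map, ← b.repr.norm_map x, mul_pow, EuclideanSpace.norm_sq_eq,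
    EuclideanSpace.norm_sq_eq, Finset.mul_sum]
  refine Finset.sum_lt_sum (fun j _ => ?_) ⟨i, Finset.mem_univ i, ?_⟩ <;>
    rw [hT.eigenvectorBasis_apply_self_apply, norm_mul, mul_pow, RCLike.norm_ofReal] <;>
    gcongr
  exacts [(hd j).le, hd i]

namespace Matrix

variable {ι : Type*} [Fintype ι] [DecidableEq ι]

section Exponential

-- Any submultiplicative norm will do: none of the statements below mentions it.
attribute [local instance] Matrix.linftyOpNormedRing Matrix.linftyOpNormedAlgebra

theorem exp_map_algebraMap {𝕜 : Type*} [RCLike 𝕜] (M : Matrix ι ι ℝ) :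
    (NormedSpace.exp M).map (algebraMap ℝ 𝕜) = NormedSpace.exp (M.map (algebraMap ℝ 𝕜)) :=
  NormedSpace.map_exp (algebraMap ℝ 𝕜).mapMatrix
    (continuous_id.matrix_map (continuous_algebraMap ℝ 𝕜)) M

theorem exp_mulVec_of_mulVec_eq_smul {𝕜 : Type*} [RCLike 𝕜] {A : Matrix ι ι 𝕜} {v : ι → 𝕜}
    {μ : 𝕜} (h : A *ᵥ v = μ • v) : NormedSpace.exp A *ᵥ v = NormedSpace.exp μ • v := by
  have hpow (k : ℕ) : A ^ k *ᵥ v = μ ^ k • v := by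
    induction k with
    | zero => simp
    | succ k ih => rw [pow_succ', ← mulVec_mulVec, ih, mulVec_smul, h, smul_smul, pow_succ]
  have hA := (NormedSpace.exp_series_hasSum_exp' (𝕂 := 𝕜) A).map (mulVec.addMonoidHomLeft v)
    (continuous_id.matrix_mulVec continuous_const)
  have hμ := (NormedSpace.exp_series_hasSum_exp' (𝕂 := 𝕜) μ).smul_const v
  refine hA.unique ?_
  convert hμ using 2 with k
  simp [mulVec.addMonoidHomLeft, smul_mulVec, hpow, smul_smul]

theorem exists_mulVec_eq_smul_of_det_exp_sub_one_eq_zero {A : Matrix ι ι ℂ}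
    (h : (NormedSpace.exp A - 1).det = 0) :
    ∃ μ : ℂ, ∃ v ≠ 0, A *ᵥ v = μ • v ∧ Complex.exp μ = 1 := by
  obtain ⟨w, hw, hEw⟩ := exists_mulVec_eq_zero_iff.mpr h
  have hcomm : Commute (toLin' (NormedSpace.exp A)) (toLin' A) :=
    ((Commute.refl A).exp_left).map toLinAlgEquiv'
  have hfix : Module.End.eigenspace (toLin' (NormedSpace.exp A)) 1 ≠ ⊥ := by
    refine (Submodule.ne_bot_iff _).mpr ⟨w, ?_, hw⟩
    simpa [Module.End.mem_eigenspace_iff, sub_mulVec, sub_eq_zero] using hEw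
  obtain ⟨μ, v, hvE, hv⟩ := Module.End.exists_hasEigenvector_mem_of_mapsTo (toLin' A) hfix
    (Module.End.mapsTo_genEigenspace_of_comm hcomm 1 1)
  have hAv : A *ᵥ v = μ • v := by simpa using hv.apply_eq_smul
  have hEv : NormedSpace.exp A *ᵥ v = v := by
    simpa [Module.End.mem_eigenspace_iff] using hvE
  have hμ : Complex.exp μ • v = (1 : ℂ) • v := by
    rw [Complex.exp_eq_exp_ℂ, ← exp_mulVec_of_mulVec_eq_smul hAv, hEv, one_smul]
  exact ⟨μ, v, hv.2, hAv, smul_left_injective ℂ hv.2 hμ⟩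

end Exponential

theorem algebraMap_mem_spectrum_map_iff {K L : Type*} [Field K] [Field L] [Algebra K L]
    (A : Matrix ι ι K) (r : K) :
    algebraMap K L r ∈ spectrum L (A.map (algebraMap K L)) ↔ r ∈ spectrum K A := by
  simp only [mem_spectrum_iff_isRoot_charpoly, charpoly_map, Polynomial.IsRoot,
    Polynomial.eval_map_algebraMap, Polynomial.aeval_algebraMap_apply,
    FaithfulSMul.algebraMap_eq_zero_iff, Polynomial.coe_aeval_eq_eval]

theorem hasEigenvalue_toLin'_of_hasEigenvalue_toEuclideanLin_map {𝕜 : Type*} [RCLike 𝕜]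
    {S : Matrix ι ι ℝ} {μ : ℝ}
    (h : Module.End.HasEigenvalue (toEuclideanLin (S.map (algebraMap ℝ 𝕜))) (μ : 𝕜)) :
    Module.End.HasEigenvalue (toLin' S) μ := by
  rw [Module.End.hasEigenvalue_iff_mem_spectrum, spectrum_toLpLin] at h
  rw [Module.End.hasEigenvalue_iff_mem_spectrum, spectrum_toLin',
    ← algebraMap_mem_spectrum_map_iff (L := 𝕜)]
  exact h

theorem norm_toEuclideanLin_J {𝕜 : Type*} [RCLike 𝕜] (v : EuclideanSpace 𝕜 (ι ⊕ ι)) :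
    ‖toEuclideanLin (J ι 𝕜) v‖ = ‖v‖ := by
  simp [EuclideanSpace.norm_eq, toLpLin_apply, J, fromBlocks_mulVec, neg_mulVec,
    Fintype.sum_sum_type, add_comm]

theorem ne_zero_and_norm_lt_of_J_mul_mulVec_eq_smul {S : Matrix (ι ⊕ ι) (ι ⊕ ι) ℝ} (hS : S.IsSymm)
    {r : ℝ} (hev : ∀ μ : ℝ, Module.End.HasEigenvalue (toLin' S) μ → 0 < |μ| ∧ |μ| < r)
    {c : ℂ} {v : ι ⊕ ι → ℂ} (hv : v ≠ 0)
    (h : (J ι ℂ * S.map (algebraMap ℝ ℂ)) *ᵥ v = c • v) : c ≠ 0 ∧ ‖c‖ < r := by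
  set T := toEuclideanLin (S.map (algebraMap ℝ ℂ))
  have hT : T.IsSymmetric := isSymmetric_toEuclideanLin_iff.mpr <|
    (isHermitian_iff_isSymm.mpr hS).map _ fun x => by simp
  have hTv : T (WithLp.toLp 2 v) = -(c • toEuclideanLin (J ι ℂ) (WithLp.toLp 2 v)) := by
    have := congrArg (J ι ℂ *ᵥ ·) h
    simp only [mulVec_mulVec, ← mul_assoc, J_squared, neg_one_mul, neg_mulVec, mulVec_smul] at this
    simp only [T, toLpLin_apply, neg_eq_iff_eq_neg.mp this, WithLp.toLp_neg, WithLp.toLp_smul]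
  have hw : WithLp.toLp 2 v ≠ 0 := by simpa using hv
  have hnorm : ‖T (WithLp.toLp 2 v)‖ = ‖c‖ * ‖WithLp.toLp 2 v‖ := by
    rw [hTv, norm_neg, norm_smul, norm_toEuclideanLin_J]
  have hc : c ≠ 0 := by
    rintro rfl
    have h0 : Module.End.HasEigenvalue T ((0 : ℝ) : ℂ) :=
      Module.End.hasEigenvalue_of_hasEigenvector ⟨by simp [hTv], hw⟩
    simpa using hev 0 (hasEigenvalue_toLin'_of_hasEigenvalue_toEuclideanLin_map h0)
  have hlt := hT.norm_apply_lt_of_forall_abs_eigenvalue_lt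
    (fun μ hμ => (hev μ (hasEigenvalue_toLin'_of_hasEigenvalue_toEuclideanLin_map hμ)).2) hw
  rw [hnorm] at hlt
  exact ⟨hc, lt_of_mul_lt_mul_right hlt (norm_nonneg _)⟩

end Matrix

theorem exp_JS_no_eigenvalue_one_general
    (n : ℕ)
    (S : Matrix (Fin n ⊕ Fin n) (Fin n ⊕ Fin n) ℝ) (hS : Sᵀ = S)
    (hev : ∀ μ : ℝ, Module.End.HasEigenvalue (Matrix.toLin' S) μ →
      0 < |μ| ∧ |μ| < 2 * Real.pi) :
    ∀ t : ℝ, 0 < t → t ≤ 1 →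
      (NormedSpace.exp (t • (Matrix.J (Fin n) ℝ * S)) - 1).det ≠ 0 := by
  intro t ht ht1 hdet
  have hdetℂ : (NormedSpace.exp (algebraMap ℝ ℂ t • (J (Fin n) ℂ * S.map (algebraMap ℝ ℂ))) -
      1).det = 0 := by
    have := congrArg (algebraMap ℝ ℂ) hdet
    rwa [RingHom.map_det, map_zero, map_sub, map_one, RingHom.mapMatrix_apply, exp_map_algebraMap,
      Matrix.map_smul' _ _ _ (map_mul _), Matrix.map_mul, map_J] at this
  obtain ⟨μ, v, hv, hAv, hμ⟩ := exists_mulVec_eq_smul_of_det_exp_sub_one_eq_zero hdetℂ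
  have ht0 : algebraMap ℝ ℂ t ≠ 0 := by simpa using ht.ne'
  have hJSv : (J (Fin n) ℂ * S.map (algebraMap ℝ ℂ)) *ᵥ v = (μ / algebraMap ℝ ℂ t) • v := by
    rw [smul_mulVec, ← mul_div_cancel₀ μ ht0, mul_smul] at hAv
    exact smul_right_injective _ ht0 hAv
  obtain ⟨hne, hlt⟩ := ne_zero_and_norm_lt_of_J_mul_mulVec_eq_smul hS hev hv hJSv
  rw [norm_div, Complex.coe_algebraMap, Complex.norm_real, Real.norm_of_nonneg ht.le] at hlt
  refine Complex.exp_ne_one_of_norm_lt (div_ne_zero_iff.mp hne).1 ?_ hμ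
  calc ‖μ‖ < 2 * Real.pi * t := (div_lt_iff₀ ht).mp hlt
    _ ≤ 2 * Real.pi := mul_le_of_le_one_right (by positivity) ht1

/-- Nondegeneracy in the Conley–Zehnder index computation: if `S` is a real symmetric
`(2n)×(2n)` matrix all of whose real eigenvalues `μ` satisfy `0 < |μ| < 2π`, then for all
`0 < t ≤ 1`, the matrix `exp(t·(J·S))` does not have `1` as an eigenvalue, i.e.
`det(exp(t·(J·S)) - Id) ≠ 0`. -/
theorem exp_JS_no_eigenvalue_one
    (n : ℕ) (hn : 1 ≤ n)
    (S : Matrix (Fin n ⊕ Fin n) (Fin n ⊕ Fin n) ℝ) (hS : Sᵀ = S)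
    (hev : ∀ μ : ℝ, Module.End.HasEigenvalue (Matrix.toLin' S) μ →
      0 < |μ| ∧ |μ| < 2 * Real.pi) :
    ∀ t : ℝ, 0 < t → t ≤ 1 →
      (NormedSpace.exp (t • (Matrix.J (Fin n) ℝ * S)) - 1).det ≠ 0 :=
  exp_JS_no_eigenvalue_one_general n S hS hev
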